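/- The critical values of F at its three critical points are F(φ, φ) = (5 + 5√5)/2, F(ψ, ψ) = (5 − 5√5)/2, and F(−1, −1) = −3, where φ = (1 + √5)/2 and ψ = (1 − √5)/2. -/

import Mathlib

open Complex

/-- The Pascaleff–Tonkonog potential function of the monotone Lagrangian torus in the
monotone blow-up of `ℂP²` at four points (Novikov parameter `T` normalized to `1`). -/
noncomputable def PTpotential (u v : ℂ) : ℂ :=
  (1 + u + v) * (1 + u⁻¹) * (1 + v⁻¹) - 3

/-- The golden ratio `(1 + √5)/2` as a complex number. -/
noncomputable def goldenφ : ℂ := (1 + (Real.sqrt 5 : ℂ)) / 2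

/-- The conjugate golden ratio `(1 - √5)/2` as a complex number. -/
noncomputable def goldenψ : ℂ := (1 - (Real.sqrt 5 : ℂ)) / 2

/-! φ and ψ are the roots of `x² = x + 1`, so `1 + x⁻¹ = x` and `F(x, x) = (1 + 2x) x² - 3 = 5x`
for both of them. -/

theorem PTpotential_self_of_sq_eq_add_one {x : ℂ} (hx : x ^ 2 = x + 1) :
    PTpotential x x = 5 * x := by
  have hx0 : x ≠ 0 := by
    rintro rfl
    norm_num at hx
  have hinv : 1 + x⁻¹ = x := by
    field_simp
    linear_combination -hx
  rw [PTpotential, hinv]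
  linear_combination (2 * x + 3) * hx

theorem goldenφ_eq_goldenRatio : goldenφ = Real.goldenRatio := by
  push_cast [goldenφ, Real.goldenRatio]
  rfl

theorem goldenψ_eq_goldenConj : goldenψ = Real.goldenConj := by
  push_cast [goldenψ, Real.goldenConj]
  rfl

theorem goldenφ_sq : goldenφ ^ 2 = goldenφ + 1 := by
  rw [goldenφ_eq_goldenRatio]
  exact_mod_cast Real.goldenRatio_sq

theorem goldenψ_sq : goldenψ ^ 2 = goldenψ + 1 := by
  rw [goldenψ_eq_goldenConj]
  exact_mod_cast Real.goldenConj_sq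

/-- The critical values of `F` at its three critical points are
`F(φ, φ) = (5 + 5√5)/2`, `F(ψ, ψ) = (5 - 5√5)/2` and `F(-1, -1) = -3`. -/
theorem critical_values_of_PTpotential :
    PTpotential goldenφ goldenφ = (5 + 5 * (Real.sqrt 5 : ℂ)) / 2 ∧
    PTpotential goldenψ goldenψ = (5 - 5 * (Real.sqrt 5 : ℂ)) / 2 ∧
    PTpotential (-1) (-1) = -3 := by
  refine ⟨?_, ?_, by norm_num [PTpotential]⟩
  · rw [PTpotential_self_of_sq_eq_add_one goldenφ_sq, goldenφ]
    ring
  · rw [PTpotential_self_of_sq_eq_add_one goldenψ_sq, goldenψ]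
    ring
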